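/- (Future residuals as instruments.) Under Assumption 4 with parameter k, for all integers t, t'' with t'' ≥ t + k, if cov(w_{t−1}, w_{t''}) ≠ 0, then cov(w_t − w_{t−1}, w_{t''}) / cov(w_{t−1}, w_{t''}) = (μ_t − μ_{t−1}) / μ_{t−1} + (μ_t / μ_{t−1}) · Var(θ_t − θ_{t−1}) / Var(θ_{t−1}); in particular μ_{t−1} ≠ 0 and Var(θ_{t−1}) ≠ 0. -/

import Mathlib

open MeasureTheory ProbabilityTheory

/-- Covariance of two real-valued random variables under measure `P`. -/
noncomputable def cov {Ω : Type*} [MeasurableSpace Ω] (P : Measure Ω) (X Y : Ω → ℝ) : ℝ :=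
  ∫ ω, (X ω - ∫ a, X a ∂P) * (Y ω - ∫ a, Y a ∂P) ∂P

/-- Variance of a real-valued random variable under measure `P`. -/
noncomputable def Var {Ω : Type*} [MeasurableSpace Ω] (P : Measure Ω) (X : Ω → ℝ) : ℝ :=
  cov P X X

/-!
Assumption 4(i) says that the increments of `θ` are uncorrelated with its past, so
`cov(θ_t, θ_s) = Var θ_s` for `s ≤ t`; in particular `Var θ_t = Var θ_{t-1} + Var Δθ_t`.
For `t'' ≥ t + k` the shocks `ε` drop out of `cov(w_s, w_{t''})` for `s ∈ {t - 1, t}`, leaving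
`μ_s μ_{t''} Var θ_s`. The IV ratio is therefore
`(μ_t Var θ_t - μ_{t-1} Var θ_{t-1}) / (μ_{t-1} Var θ_{t-1})`, which rearranges to the bias
formula.
-/

theorem cov_eq_covariance {Ω : Type*} [MeasurableSpace Ω] (P : Measure Ω) (X Y : Ω → ℝ) :
    cov P X Y = covariance X Y P :=
  rfl

section

variable {Ω : Type*} [MeasurableSpace Ω] {P : Measure Ω} [IsFiniteMeasure P]

theorem covariance_const_mul_add_const_mul_add {X X' Y Y' : Ω → ℝ} (a b : ℝ)
    (hX : MemLp X 2 P) (hX' : MemLp X' 2 P) (hY : MemLp Y 2 P) (hY' : MemLp Y' 2 P)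
    (hXY' : cov[X, Y'; P] = 0) (hYX' : cov[Y, X'; P] = 0) (hYY' : cov[Y, Y'; P] = 0) :
    cov[fun ω => a * X ω + Y ω, fun ω => b * X' ω + Y' ω; P] = a * b * cov[X, X'; P] := by
  have haX : MemLp (fun ω => a * X ω) 2 P := hX.const_mul a
  have hbX' : MemLp (fun ω => b * X' ω) 2 P := hX'.const_mul b
  change cov[(fun ω => a * X ω) + Y, (fun ω => b * X' ω) + Y'; P] = _
  rw [covariance_add_left haX hY (hbX'.add hY'), covariance_add_right haX hbX' hY',
    covariance_add_right hY hbX' hY', covariance_const_mul_left, covariance_const_mul_right,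
    covariance_const_mul_left, covariance_const_mul_right, hXY', hYX', hYY']
  ring

theorem covariance_self_eq_add_of_covariance_sub_eq_zero {X Y : Ω → ℝ}
    (hX : MemLp X 2 P) (hY : MemLp Y 2 P) (h : cov[fun ω => Y ω - X ω, X; P] = 0) :
    cov[Y, Y; P] = cov[X, X; P] + cov[fun ω => Y ω - X ω, fun ω => Y ω - X ω; P] := by
  rw [covariance_fun_sub_left hY hX hX] at h
  rw [covariance_fun_sub_fun_sub hY hX hY hX, covariance_comm X Y]
  linarith

theorem covariance_eq_covariance_self_of_uncorrelated_increments {θ : ℤ → Ω → ℝ}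
    (hθ : ∀ t, MemLp (θ t) 2 P)
    (hinc : ∀ t s, 1 ≤ t - s → cov[fun ω => θ t ω - θ (t - 1) ω, θ s; P] = 0)
    {s t : ℤ} (hst : s ≤ t) :
    cov[θ t, θ s; P] = cov[θ s, θ s; P] := by
  induction t, hst using Int.leInduction with
  | base => rfl
  | succ n hsn ih =>
    have h := hinc (n + 1) s (by omega)
    rw [add_sub_cancel_right, covariance_fun_sub_left (hθ _) (hθ _) (hθ _), ih] at h
    linarith

end

theorem IV_future_instruments_bias_general
    {Ω : Type*} [MeasurableSpace Ω] (P : Measure Ω) [IsProbabilityMeasure P]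
    (θ ε : ℤ → Ω → ℝ) (μ : ℤ → ℝ) (w : ℤ → Ω → ℝ)
    (hθ : ∀ t, MemLp (θ t) 2 P) (hε : ∀ t, MemLp (ε t) 2 P)
    (hw : ∀ t ω, w t ω = μ t * θ t ω + ε t ω)
    (k : ℕ)
    (A4i : ∀ t t' : ℤ, 1 ≤ t - t' →
      cov P (fun ω => θ t ω - θ (t - 1) ω) (θ t') = 0)
    (A4ii : ∀ t t' : ℤ, cov P (θ t) (ε t') = 0)
    (A4iii : ∀ t t' : ℤ, (k : ℤ) ≤ |t - t'| → cov P (ε t) (ε t') = 0) :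
    ∀ t t'' : ℤ, t + k ≤ t'' →
      cov P (w (t - 1)) (w t'') ≠ 0 →
      μ (t - 1) ≠ 0 ∧ Var P (θ (t - 1)) ≠ 0 ∧
        cov P (fun ω => w t ω - w (t - 1) ω) (w t'') / cov P (w (t - 1)) (w t'') =
          (μ t - μ (t - 1)) / μ (t - 1) +
            (μ t / μ (t - 1)) *
              (Var P (fun ω => θ t ω - θ (t - 1) ω) / Var P (θ (t - 1))) := by
  intro t t'' htt'' hden
  have hw_eq : w = fun t ω => μ t * θ t ω + ε t ω := funext₂ hw
  have hw_memLp : ∀ s, MemLp (w s) 2 P := fun s => hw_eq ▸ ((hθ s).const_mul _).add (hε s)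
  simp only [Var, cov_eq_covariance] at *
  have hw_cov : ∀ s ≤ t, cov[w s, w t''; P] = μ s * μ t'' * cov[θ s, θ s; P] := by
    intro s hs
    rw [hw_eq, covariance_const_mul_add_const_mul_add _ _ (hθ s) (hθ t'') (hε s) (hε t'')
      (A4ii s t'') (by rw [covariance_comm]; exact A4ii t'' s)
      (A4iii s t'' (by rw [abs_sub_comm, abs_of_nonneg (by omega)]; omega)),
      covariance_comm, covariance_eq_covariance_self_of_uncorrelated_increments hθ A4i (by omega)]
  have hvar := covariance_self_eq_add_of_covariance_sub_eq_zero (hθ (t - 1)) (hθ t)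
    (A4i t (t - 1) (by omega))
  rw [hw_cov (t - 1) (by omega)] at hden ⊢
  obtain ⟨⟨hμ, hμ''⟩, hV⟩ :
      (μ (t - 1) ≠ 0 ∧ μ t'' ≠ 0) ∧ cov[θ (t - 1), θ (t - 1); P] ≠ 0 := by
    simpa only [mul_ne_zero_iff] using hden
  refine ⟨hμ, hV, ?_⟩
  rw [covariance_fun_sub_left (hw_memLp t) (hw_memLp _) (hw_memLp _), hw_cov t le_rfl,
    hw_cov (t - 1) (by omega), hvar]
  field_simp
  ring

/-- Future residuals as instruments: under Assumption 4, for `t'' ≥ t + k`, the IV estimand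
using a future residual as instrument equals the return growth plus a bias term
`(μ t / μ (t−1)) * Var (Δθ t) / Var (θ (t−1))`. -/
theorem IV_future_instruments_bias
    {Ω : Type*} [MeasurableSpace Ω] (P : Measure Ω) [IsProbabilityMeasure P]
    (θ ε : ℤ → Ω → ℝ) (μ : ℤ → ℝ) (w : ℤ → Ω → ℝ)
    (hθ : ∀ t, MemLp (θ t) 2 P) (hε : ∀ t, MemLp (ε t) 2 P)
    (hw : ∀ t ω, w t ω = μ t * θ t ω + ε t ω)
    (k : ℕ) (hk : 1 ≤ k)
    (A4i : ∀ t t' : ℤ, 1 ≤ t - t' →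
      cov P (fun ω => θ t ω - θ (t - 1) ω) (θ t') = 0)
    (A4ii : ∀ t t' : ℤ, cov P (θ t) (ε t') = 0)
    (A4iii : ∀ t t' : ℤ, (k : ℤ) ≤ |t - t'| → cov P (ε t) (ε t') = 0) :
    ∀ t t'' : ℤ, t + k ≤ t'' →
      cov P (w (t - 1)) (w t'') ≠ 0 →
      μ (t - 1) ≠ 0 ∧ Var P (θ (t - 1)) ≠ 0 ∧
        cov P (fun ω => w t ω - w (t - 1) ω) (w t'') / cov P (w (t - 1)) (w t'') =
          (μ t - μ (t - 1)) / μ (t - 1) +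
            (μ t / μ (t - 1)) *
              (Var P (fun ω => θ t ω - θ (t - 1) ω) / Var P (θ (t - 1))) :=
  IV_future_instruments_bias_general P θ ε μ w hθ hε hw k A4i A4ii A4iii
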